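/- For all b, η ∈ ℂ with 1 − conj(b)·η ≠ 0, one has (1 + |b|²)·(1 + |η|²) / ((1 − conj(b)·η)²·(1 + |(b + η)/(1 − conj(b)·η)|²)) = (1 − b·conj(η))/(1 − conj(b)·η). Equivalently, the pullback under the left translation L_b of the canonical 1-form θ¹ = dη/(1 + |η|²) of the loop QℂC equals l_{(b,η)}·θ¹, where l_{(b,η)} = (1 − b·conj(η))/(1 − conj(b)·η) is the left associator factor; this is the transformation law (L_b^*ω)(V) = l_{(b,a)∗} ω(V) of the canonical Ad-form under left translations for the loop QℂC. -/

import Mathlib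

open Complex ComplexConjugate

/-! The map `η ↦ (b + η)/(1 - conj b * η)` satisfies the Lagrange-type identity
`|1 - conj b η|² + |b + η|² = (1 + |b|²)(1 + |η|²)`, so `1 + |b·η|²` equals
`(1 + |b|²)(1 + |η|²)/|1 - conj b η|²` and the left-hand side collapses to
`|d|²/d² = conj d / d` with `d = 1 - conj b η`. -/

theorem normSq_one_sub_conj_mul_add_normSq_add (b η : ℂ) :
    normSq (1 - conj b * η) + normSq (b + η) = (1 + normSq b) * (1 + normSq η) := by
  simp only [normSq_apply, sub_re, sub_im, add_re, add_im, mul_re, mul_im, conj_re, conj_im,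
    one_re, one_im]
  ring

theorem one_add_sq_norm_div (w d : ℂ) (hd : d ≠ 0) :
    (1 + ‖w / d‖ ^ 2 : ℝ) = (normSq d + normSq w) / normSq d := by
  have hd' : normSq d ≠ 0 := normSq_eq_zero.not.mpr hd
  rw [norm_div, div_pow, ← normSq_eq_norm_sq, ← normSq_eq_norm_sq]
  field_simp

theorem normSq_div_sq (z : ℂ) : (normSq z : ℂ) / z ^ 2 = conj z / z := by
  rcases eq_or_ne z 0 with rfl | hz
  · simp
  · rw [← mul_conj]
    field_simp

theorem qc_canonical_form_left_transform_general (b η : ℂ) :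
    ((1 + (Complex.normSq b : ℂ)) * (1 + (Complex.normSq η : ℂ))) /
        ((1 - (starRingEnd ℂ) b * η) ^ 2 *
          (1 + (‖(b + η) / (1 - (starRingEnd ℂ) b * η)‖ : ℂ) ^ 2)) =
      (1 - b * (starRingEnd ℂ) η) / (1 - (starRingEnd ℂ) b * η) := by
  set d := 1 - conj b * η with hd
  have hconj : conj d = 1 - b * conj η := by simp [hd]
  rcases eq_or_ne d 0 with hd0 | hd0
  · -- both sides are junk values `x / 0 = 0`
    simp only [hd0, zero_pow two_ne_zero, zero_mul, div_zero]
  have hfactor : (1 + (‖(b + η) / d‖ : ℂ) ^ 2) = (1 + normSq b) * (1 + normSq η) / normSq d := by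
    exact_mod_cast (one_add_sq_norm_div (b + η) d hd0).trans
      (by rw [hd, normSq_one_sub_conj_mul_add_normSq_add])
  have hprod : (1 + (normSq b : ℂ)) * (1 + normSq η) ≠ 0 := by
    have hpos : 0 < (1 + normSq b) * (1 + normSq η) := by
      have := normSq_nonneg b; have := normSq_nonneg η; positivity
    exact_mod_cast hpos.ne'
  have hnd : (normSq d : ℂ) ≠ 0 := by exact_mod_cast normSq_eq_zero.not.mpr hd0
  rw [hfactor, ← hconj, ← normSq_div_sq]
  field_simp
  exact div_self hprod

/-- the pullback of the canonical 1-form θ¹ = dη/(1+|η|²) of the loop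
    QℂC under the left translation L_b equals l_{(b,η)}·θ¹: since L_b has complex
    derivative (1+|b|²)/(1−conj(b)·η)², this reads
    (1+|b|²)(1+|η|²)/((1−conj(b)·η)²·(1+|b·η|²)) = (1−b·conj η)/(1−conj(b)·η),
    where b·η = (b+η)/(1−conj(b)·η). -/
theorem qc_canonical_form_left_transform (b η : ℂ)
    (h : 1 - (starRingEnd ℂ) b * η ≠ 0) :
    ((1 + (Complex.normSq b : ℂ)) * (1 + (Complex.normSq η : ℂ))) /
        ((1 - (starRingEnd ℂ) b * η) ^ 2 *
          (1 + (‖(b + η) / (1 - (starRingEnd ℂ) b * η)‖ : ℂ) ^ 2)) =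
      (1 - b * (starRingEnd ℂ) η) / (1 - (starRingEnd ℂ) b * η) :=
  qc_canonical_form_left_transform_general b η
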